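/- arXiv:math/9309206 — 2 statements merged into one kernel-verified Lean document; each statement's English description precedes it below -/
import Mathlib

section
/- With g, (kₙ), and (A_α) as specified, each set B_α = { f ∈ ∏ₙ g(n) : ∀ n ∈ A_α, f(kₙ) = (g(kₙ)−1)/2 } maps under the canonical identification to a strongly symmetrically porous subset of [0,1]. -/
open Set Filter

/-- λ(A,(a,b)): supremum of lengths of open subintervals of (a,b) disjoint from A. -/
noncomputable def lamGap (A : Set ℝ) (a b : ℝ) : ℝ :=
  sSup {l : ℝ | 0 ≤ l ∧ ∃ c, a ≤ c ∧ c + l ≤ b ∧ Set.Ioo c (c + l) ∩ A = ∅}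

/-- λ*(A,(c,d)): supremum of δ ≥ 0 such that (c,c+δ) ∪ (d−δ,d) is disjoint from A. -/
noncomputable def lamSym (A : Set ℝ) (c d : ℝ) : ℝ :=
  sSup {δ : ℝ | 0 ≤ δ ∧ (Set.Ioo c (c + δ) ∪ Set.Ioo (d - δ) d) ∩ A = ∅}

/-- porosity p(A,r) -/
noncomputable def por (A : Set ℝ) (r : ℝ) : ℝ :=
  Filter.limsup (fun ε => lamGap A (r - ε) (r + ε) / ε) (nhdsWithin 0 (Set.Ioi 0))

/-- symmetric porosity s(A,r) -/
noncomputable def spor (A : Set ℝ) (r : ℝ) : ℝ :=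
  Filter.limsup (fun ε => lamSym A (r - ε) (r + ε) / ε) (nhdsWithin 0 (Set.Ioi 0))

def Porous (A : Set ℝ) : Prop := ∀ a ∈ A, 0 < por A a
def StronglyPorous (A : Set ℝ) : Prop := ∀ a ∈ A, por A a = 1
def SymPorous (A : Set ℝ) : Prop := ∀ a ∈ A, 0 < spor A a
def StronglySymPorous (A : Set ℝ) : Prop := ∀ a ∈ A, spor A a = 1

/-- The σ-ideal on [0,1] generated by the sets (⊆ [0,1]) satisfying P. -/
def sigmaIdeal (P : Set ℝ → Prop) : Set (Set ℝ) :=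
  {A | A ⊆ Set.Icc 0 1 ∧
    ∃ f : ℕ → Set ℝ, (∀ n, P (f n) ∧ f n ⊆ Set.Icc 0 1) ∧ A ⊆ ⋃ n, f n}

/-- The identification X → [0,1] determined by singleton weights w n j = μₙ({j}):
the basic clopen set [σ] maps to an interval of length ∏_{n<|σ|} w n (σ n). -/
noncomputable def weightMap (w : ℕ → ℕ → ℝ) (f : ℕ → ℕ) : ℝ :=
  ∑' n, (∏ k ∈ Finset.range n, w k (f k)) * (∑ j ∈ Finset.range (f n), w n j)

/-!
The image of `f` lies in the image `[a, a + L]` of each of its cylinders. At a level `q` where every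
element of the set has the middle digit, the cylinder splits into a left block of relative length
`s`, the middle digit's block of relative length `c` and a right block of relative length `s`, and
the set meets `[a, a + L]` only inside the middle block. Centring at the image of `f` a window that
reaches the nearer end of the cylinder leaves two symmetric gaps occupying a fraction at least
`1 - 4c` of the window. The middle weight `c` of level `q` tends to `0` because the flat part of
`μ_q` has `g q - 2 m q → ∞` atoms (as `2 ^ m q ≤ ℓ q ^ m q = o(g q)`), and `L` tends to `0`
because it is a product containing the middle weights of all earlier levels in the set; so
`s(B, x) = 1`.
-/

open Topology

section Cylinder

open Finset

/-- The image under `weightMap w` of the cylinder of `f` of length `N` is the interval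
`[cylStart w f N, cylStart w f N + cylLength w f N]`. -/
noncomputable def cylLength (w : ℕ → ℕ → ℝ) (f : ℕ → ℕ) (N : ℕ) : ℝ :=
  ∏ k ∈ range N, w k (f k)

noncomputable def cylStart (w : ℕ → ℕ → ℝ) (f : ℕ → ℕ) (N : ℕ) : ℝ :=
  ∑ n ∈ range N, cylLength w f n * ∑ j ∈ range (f n), w n j

variable {w : ℕ → ℕ → ℝ} {g : ℕ → ℕ} {f f' : ℕ → ℕ} {N : ℕ}

@[simp]
lemma cylLength_zero (w : ℕ → ℕ → ℝ) (f : ℕ → ℕ) : cylLength w f 0 = 1 :=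
  prod_range_zero _

@[simp]
lemma cylStart_zero (w : ℕ → ℕ → ℝ) (f : ℕ → ℕ) : cylStart w f 0 = 0 :=
  sum_range_zero _

lemma cylLength_succ (w : ℕ → ℕ → ℝ) (f : ℕ → ℕ) (N : ℕ) :
    cylLength w f (N + 1) = cylLength w f N * w N (f N) :=
  prod_range_succ _ _

lemma cylStart_succ (w : ℕ → ℕ → ℝ) (f : ℕ → ℕ) (N : ℕ) :
    cylStart w f (N + 1) = cylStart w f N + cylLength w f N * ∑ j ∈ range (f N), w N j :=
  sum_range_succ _ _

lemma cylLength_congr (h : ∀ p < N, f' p = f p) : cylLength w f' N = cylLength w f N :=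
  prod_congr rfl fun p hp => by rw [h p (mem_range.1 hp)]

lemma cylStart_congr (h : ∀ p < N, f' p = f p) : cylStart w f' N = cylStart w f N :=
  sum_congr rfl fun n hn => by
    have hnN := mem_range.1 hn
    rw [cylLength_congr fun p hp => h p (hp.trans hnN), h n hnN]

lemma sum_range_mono_of_nonneg (hw : ∀ n j, j < g n → 0 ≤ w n j) {n i j : ℕ} (hij : i ≤ j)
    (hj : j ≤ g n) : ∑ p ∈ range i, w n p ≤ ∑ p ∈ range j, w n p :=
  sum_le_sum_of_subset_of_nonneg (range_subset_range.2 hij) fun p hp _ =>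
    hw n p ((mem_range.1 hp).trans_le hj)

lemma sum_range_le_one (hw : ∀ n j, j < g n → 0 ≤ w n j)
    (hw1 : ∀ n, ∑ j ∈ range (g n), w n j ≤ 1) {n j : ℕ} (hj : j ≤ g n) :
    ∑ p ∈ range j, w n p ≤ 1 :=
  (sum_range_mono_of_nonneg hw hj le_rfl).trans (hw1 n)

lemma weight_le_one (hw : ∀ n j, j < g n → 0 ≤ w n j)
    (hw1 : ∀ n, ∑ j ∈ range (g n), w n j ≤ 1) {n j : ℕ} (hj : j < g n) : w n j ≤ 1 :=
  (single_le_sum (fun i hi => hw n i (mem_range.1 hi)) (mem_range.2 hj)).trans (hw1 n)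

lemma cylLength_pos (hwpos : ∀ n j, j < g n → 0 < w n j) (hf : ∀ n, f n < g n) (N : ℕ) :
    0 < cylLength w f N :=
  prod_pos fun p _ => hwpos p _ (hf p)

lemma cylLength_nonneg (hw : ∀ n j, j < g n → 0 ≤ w n j) (hf : ∀ n, f n < g n) (N : ℕ) :
    0 ≤ cylLength w f N :=
  prod_nonneg fun p _ => hw p _ (hf p)

lemma cylLength_le_weight (hw : ∀ n j, j < g n → 0 ≤ w n j)
    (hw1 : ∀ n, ∑ j ∈ range (g n), w n j ≤ 1) (hf : ∀ n, f n < g n) {q : ℕ} (hq : q < N) :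
    cylLength w f N ≤ w q (f q) := by
  rw [cylLength, ← mul_prod_erase _ _ (mem_range.2 hq)]
  exact mul_le_of_le_one_right (hw q _ (hf q))
    (prod_le_one (fun p _ => hw p _ (hf p)) fun p _ => weight_le_one hw hw1 (hf p))

lemma cylStart_term_nonneg (hw : ∀ n j, j < g n → 0 ≤ w n j) (hf : ∀ n, f n < g n) (n : ℕ) :
    0 ≤ cylLength w f n * ∑ j ∈ range (f n), w n j :=
  mul_nonneg (cylLength_nonneg hw hf n)
    (sum_nonneg fun j hj => hw n j ((mem_range.1 hj).trans (hf n)))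

lemma cylStart_mono (hw : ∀ n j, j < g n → 0 ≤ w n j) (hf : ∀ n, f n < g n) :
    Monotone (cylStart w f) :=
  monotone_nat_of_le_succ fun N => by
    rw [cylStart_succ]
    linarith [cylStart_term_nonneg hw hf N]

lemma cylEnd_antitone (hw : ∀ n j, j < g n → 0 ≤ w n j)
    (hw1 : ∀ n, ∑ j ∈ range (g n), w n j ≤ 1) (hf : ∀ n, f n < g n) :
    Antitone fun N => cylStart w f N + cylLength w f N :=
  antitone_nat_of_succ_le fun N => by
    have h := sum_range_le_one hw hw1 (hf N)
    rw [sum_range_succ] at h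
    rw [cylStart_succ, cylLength_succ]
    nlinarith [cylLength_nonneg hw hf N]

lemma summable_cylStart_term (hw : ∀ n j, j < g n → 0 ≤ w n j)
    (hw1 : ∀ n, ∑ j ∈ range (g n), w n j ≤ 1) (hf : ∀ n, f n < g n) :
    Summable fun n => cylLength w f n * ∑ j ∈ range (f n), w n j :=
  summable_of_sum_range_le (c := 1) (cylStart_term_nonneg hw hf) fun N => by
    have h := cylEnd_antitone hw hw1 hf N.zero_le
    simp only [cylStart_zero, cylLength_zero] at h
    change cylStart w f N ≤ 1
    linarith [cylLength_nonneg hw hf N]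

lemma weightMap_mem_cylinder (hw : ∀ n j, j < g n → 0 ≤ w n j)
    (hw1 : ∀ n, ∑ j ∈ range (g n), w n j ≤ 1) (hf : ∀ n, f n < g n) (N : ℕ) :
    weightMap w f ∈ Icc (cylStart w f N) (cylStart w f N + cylLength w f N) := by
  have hsum := summable_cylStart_term hw hw1 hf
  refine ⟨hsum.sum_le_tsum _ fun n _ => cylStart_term_nonneg hw hf n,
    hsum.tsum_le_of_sum_range_le fun M => ?_⟩
  change cylStart w f M ≤ _
  rcases le_total M N with h | h
  · linarith [cylStart_mono hw hf h, cylLength_nonneg hw hf N]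
  · linarith [cylEnd_antitone hw hw1 hf h, cylLength_nonneg hw hf M]

lemma cylEnd_succ_le_of_lt (hw : ∀ n j, j < g n → 0 ≤ w n j) (hf : ∀ n, f n < g n)
    (h : ∀ p < N, f' p = f p) (hlt : f' N < f N) :
    cylStart w f' (N + 1) + cylLength w f' (N + 1) ≤ cylStart w f (N + 1) := by
  rw [cylStart_succ, cylLength_succ, cylStart_succ, cylStart_congr h, cylLength_congr h,
    add_assoc, ← mul_add, ← sum_range_succ]
  exact add_le_add_right (mul_le_mul_of_nonneg_left (sum_range_mono_of_nonneg hw hlt (hf N).le)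
    (cylLength_nonneg hw hf N)) _

lemma eqOn_or_weightMap_le_or_ge (hw : ∀ n j, j < g n → 0 ≤ w n j)
    (hw1 : ∀ n, ∑ j ∈ range (g n), w n j ≤ 1) (hf : ∀ n, f n < g n) (hf' : ∀ n, f' n < g n)
    (N : ℕ) :
    (∀ p < N, f' p = f p) ∨ weightMap w f' ≤ cylStart w f N ∨
      cylStart w f N + cylLength w f N ≤ weightMap w f' := by
  induction N with
  | zero => exact Or.inl fun p hp => absurd hp p.not_lt_zero
  | succ N ih =>
    rcases ih with h | h | h
    · rcases lt_trichotomy (f' N) (f N) with hlt | heq | hgt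
      · exact Or.inr <| Or.inl <|
          (weightMap_mem_cylinder hw hw1 hf' _).2.trans (cylEnd_succ_le_of_lt hw hf h hlt)
      · exact Or.inl fun p hp => (Nat.lt_succ_iff_lt_or_eq.1 hp).elim (h p) (· ▸ heq)
      · exact Or.inr <| Or.inr <|
          (cylEnd_succ_le_of_lt hw hf' (fun p hp => (h p hp).symm) hgt).trans
            (weightMap_mem_cylinder hw hw1 hf' _).1
    · exact Or.inr <| Or.inl <| h.trans (cylStart_mono hw hf N.le_succ)
    · exact Or.inr <| Or.inr <| (cylEnd_antitone hw hw1 hf N.le_succ).trans h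

lemma weightMap_le_or_ge_or_mem_of_eq (hw : ∀ n j, j < g n → 0 ≤ w n j)
    (hw1 : ∀ n, ∑ j ∈ range (g n), w n j ≤ 1) (hf : ∀ n, f n < g n) (hf' : ∀ n, f' n < g n)
    {q : ℕ} (hq : f' q = f q) :
    weightMap w f' ≤ cylStart w f q ∨ cylStart w f q + cylLength w f q ≤ weightMap w f' ∨
      weightMap w f' ∈
        Icc (cylStart w f (q + 1)) (cylStart w f (q + 1) + cylLength w f (q + 1)) := by
  rcases eqOn_or_weightMap_le_or_ge hw hw1 hf hf' q with h | h | h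
  · have h' : ∀ p < q + 1, f' p = f p := fun p hp =>
      (Nat.lt_succ_iff_lt_or_eq.1 hp).elim (h p) (· ▸ hq)
    rw [← cylStart_congr h', ← cylLength_congr h']
    exact Or.inr <| Or.inr <| weightMap_mem_cylinder hw hw1 hf' _
  · exact Or.inl h
  · exact Or.inr <| Or.inl h

lemma tendsto_cylLength_zero (hw : ∀ n j, j < g n → 0 ≤ w n j)
    (hw1 : ∀ n, ∑ j ∈ range (g n), w n j ≤ 1) (hf : ∀ n, f n < g n)
    (h : ∀ η > 0, ∃ q, w q (f q) < η) : Tendsto (cylLength w f) atTop (𝓝 0) := by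
  refine tendsto_order.2 ⟨fun a ha => Eventually.of_forall fun N =>
    ha.trans_le (cylLength_nonneg hw hf N), fun η hη => ?_⟩
  obtain ⟨q, hq⟩ := h η hη
  exact eventually_atTop.2 ⟨q + 1, fun N hN => (cylLength_le_weight hw hw1 hf hN).trans_lt hq⟩

end Cylinder

section Porosity

variable {B : Set ℝ} {x ε : ℝ}

lemma lamSym_set_le_of_mem (hx : x ∈ B) (hε : 0 < ε) {δ : ℝ}
    (hδ : δ ∈ {δ : ℝ | 0 ≤ δ ∧ (Ioo (x - ε) (x - ε + δ) ∪ Ioo (x + ε - δ) (x + ε)) ∩ B = ∅}) :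
    δ ≤ ε := by
  by_contra! h
  have hmem : x ∈ (Ioo (x - ε) (x - ε + δ) ∪ Ioo (x + ε - δ) (x + ε)) ∩ B :=
    ⟨Or.inl ⟨by linarith [hδ.1], by linarith⟩, hx⟩
  rw [hδ.2] at hmem
  exact hmem

lemma lamSym_le_of_mem (hx : x ∈ B) (hε : 0 < ε) : lamSym B (x - ε) (x + ε) ≤ ε :=
  csSup_le ⟨0, le_rfl, by simp⟩ fun _ hδ => lamSym_set_le_of_mem hx hε hδ

lemma le_lamSym_of_mem (hx : x ∈ B) (hε : 0 < ε) {δ : ℝ} (hδ : 0 ≤ δ)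
    (hgap : (Ioo (x - ε) (x - ε + δ) ∪ Ioo (x + ε - δ) (x + ε)) ∩ B = ∅) :
    δ ≤ lamSym B (x - ε) (x + ε) :=
  le_csSup ⟨ε, fun _ hδ' => lamSym_set_le_of_mem hx hε hδ'⟩ ⟨hδ, hgap⟩

lemma lamSym_nonneg_of_mem (hx : x ∈ B) (hε : 0 < ε) : 0 ≤ lamSym B (x - ε) (x + ε) :=
  le_lamSym_of_mem hx hε le_rfl (by simp)

lemma limsup_nhdsGT_zero_eq_of_forall_exists {F : ℝ → ℝ} {a : ℝ} (hle : ∀ ε > 0, F ε ≤ a)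
    (hge : ∀ η > 0, ∀ u > 0, ∃ ε ∈ Ioo 0 u, a - η ≤ F ε) : limsup F (𝓝[>] 0) = a := by
  have hfreq : ∀ η > 0, ∃ᶠ ε in 𝓝[>] (0 : ℝ), a - η ≤ F ε := fun η hη =>
    frequently_iff.2 fun {_} hU => by
      obtain ⟨u, hu, hsub⟩ := mem_nhdsGT_iff_exists_Ioo_subset.1 hU
      obtain ⟨ε, hε, hFε⟩ := hge η hη u hu
      exact ⟨ε, hsub hε, hFε⟩
  have hev : ∀ᶠ ε in 𝓝[>] (0 : ℝ), F ε ≤ a := eventually_nhdsWithin_of_forall hle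
  refine le_antisymm (limsup_le_of_le (IsCoboundedUnder.of_frequently_ge (hfreq 1 one_pos)) hev)
    (le_of_forall_sub_le fun η hη => le_limsup_of_frequently_le (hfreq η hη)
      (isBoundedUnder_of_eventually_le hev))

lemma spor_eq_one_of_forall_exists (hx : x ∈ B)
    (h : ∀ η > 0, ∀ u > 0, ∃ ε ∈ Ioo 0 u, 1 - η ≤ lamSym B (x - ε) (x + ε) / ε) :
    spor B x = 1 :=
  limsup_nhdsGT_zero_eq_of_forall_exists
    (fun _ hε => div_le_one_of_le₀ (lamSym_le_of_mem hx hε) hε.le) h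

lemma exists_one_sub_four_mul_le_lamSym_div (hx : x ∈ B) {a L s c : ℝ} (hL : 0 < L)
    (hc : c ≤ 1 / 2) (hsc : 2 * s + c = 1) (hxs : a + L * s ≤ x) (hxc : x ≤ a + L * s + L * c)
    (hB : ∀ y ∈ B, y ≤ a ∨ a + L ≤ y ∨ (a + L * s ≤ y ∧ y ≤ a + L * s + L * c)) :
    ∃ ε, 0 < ε ∧ ε ≤ L / 2 ∧ 1 - 4 * c ≤ lamSym B (x - ε) (x + ε) / ε := by
  set ε := min (x - a) (a + L - x)
  have hεl : ε ≤ x - a := min_le_left _ _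
  have hεr : ε ≤ a + L - x := min_le_right _ _
  have hLsc : L * s + L * s + L * c = L := by linear_combination L * hsc
  have hεs : L * s ≤ ε := le_min (by linarith) (by linarith)
  have hε : 0 < ε := lt_of_lt_of_le (by nlinarith) hεs
  have hlam : ε - L * c ≤ lamSym B (x - ε) (x + ε) := by
    rcases le_total (ε - L * c) 0 with hδ | hδ
    · exact hδ.trans (lamSym_nonneg_of_mem hx hε)
    refine le_lamSym_of_mem hx hε hδ (eq_empty_iff_forall_notMem.2 ?_)
    rintro y ⟨hy | hy, hyB⟩ <;> obtain ⟨hy₁, hy₂⟩ := hy <;>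
      rcases hB y hyB with h | h | ⟨h₁, h₂⟩ <;> linarith
  refine ⟨ε, hε, by linarith, ?_⟩
  rw [le_div_iff₀ hε]
  nlinarith

end Porosity

open Finset in
theorem stronglySymPorous_weightMap_image_of_digit_eq {w : ℕ → ℕ → ℝ} {g d : ℕ → ℕ}
    {E : Set ℕ} (hwpos : ∀ n j, j < g n → 0 < w n j) (hw1 : ∀ n, ∑ j ∈ range (g n), w n j ≤ 1)
    (hbal : ∀ n, 2 * ∑ j ∈ range (d n), w n j + w n (d n) = 1)
    (hd : Tendsto (fun n => w n (d n)) atTop (𝓝 0)) (hE : E.Infinite) :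
    StronglySymPorous (weightMap w '' {f | (∀ n, f n < g n) ∧ ∀ p ∈ E, f p = d p}) := by
  have hw : ∀ n j, j < g n → 0 ≤ w n j := fun n j h => (hwpos n j h).le
  have hEfreq : ∃ᶠ p in atTop, p ∈ E := Nat.frequently_atTop_iff_infinite.2 hE
  rintro _ ⟨f, hfS, rfl⟩
  have hx := Set.mem_image_of_mem (weightMap w) hfS
  obtain ⟨hf, hfE⟩ := hfS
  have hL : Tendsto (cylLength w f) atTop (𝓝 0) := tendsto_cylLength_zero hw hw1 hf fun η hη => by
    obtain ⟨q, hqE, hq⟩ := (hEfreq.and_eventually (hd.eventually_lt_const hη)).exists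
    exact ⟨q, by rwa [hfE q hqE]⟩
  refine spor_eq_one_of_forall_exists hx fun η hη u hu => ?_
  have hc : ∀ᶠ q in atTop, w q (d q) ≤ 1 / 2 := hd.eventually_le_const (by norm_num)
  have hcη : ∀ᶠ q in atTop, 4 * w q (d q) ≤ η :=
    (hd.const_mul 4).eventually_le_const (by simpa using hη)
  have hLu : ∀ᶠ q in atTop, cylLength w f q < 2 * u := hL.eventually_lt_const (by positivity)
  obtain ⟨q, hqE, hc, hcη, hLu⟩ := (hEfreq.and_eventually (hc.and (hcη.and hLu))).exists
  have hfq := hfE q hqE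
  have hmid := weightMap_mem_cylinder hw hw1 hf (q + 1)
  rw [cylStart_succ, cylLength_succ, hfq] at hmid
  obtain ⟨ε, hε, hεL, hratio⟩ := exists_one_sub_four_mul_le_lamSym_div
    hx (cylLength_pos hwpos hf q) hc (hbal q) hmid.1 hmid.2 <| by
      rintro _ ⟨f', ⟨hf', hf'E⟩, rfl⟩
      have h := weightMap_le_or_ge_or_mem_of_eq hw hw1 hf hf' ((hf'E q hqE).trans hfq.symm)
      rwa [cylStart_succ, cylLength_succ, hfq] at h
  exact ⟨ε, ⟨hε, by linarith⟩, by linarith⟩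

section Level

open Finset

variable {v : ℕ → ℝ} {G M : ℕ}

lemma eq_reflect_of_flat_of_end_symm (hMG : 2 * M < G)
    (hflat : ∀ i j, M ≤ i → i ≤ j → j ≤ G - M - 1 → v i = v j)
    (hend : ∀ i < M, v i = v (G - i - 1)) {i : ℕ} (hi : i < G) : v i = v (G - 1 - i) := by
  by_cases h₁ : i < M
  · rw [hend i h₁, Nat.sub_right_comm]
  by_cases h₂ : G - 1 - i < M
  · rw [hend _ h₂]
    congr 1
    omega
  rcases le_total i (G - 1 - i) with h | h
  · exact hflat _ _ (by omega) h (by omega)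
  · exact (hflat _ _ (by omega) h (by omega)).symm

lemma two_mul_sum_range_mid_add (hG : Odd G) (hv : ∀ i < G, v i = v (G - 1 - i)) :
    2 * ∑ j ∈ range ((G - 1) / 2), v j + v ((G - 1) / 2) = ∑ j ∈ range G, v j := by
  obtain ⟨t, rfl⟩ := hG
  have ht : (2 * t + 1 - 1) / 2 = t := by omega
  have hrefl : ∑ j ∈ range t, v (t + 1 + j) = ∑ j ∈ range t, v j := by
    rw [← sum_range_reflect v t]
    refine sum_congr rfl fun j hj => ?_
    have hj := mem_range.1 hj
    rw [hv _ (by omega)]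
    congr 1
    omega
  rw [ht, show 2 * t + 1 = t + 1 + t by ring, sum_range_add, sum_range_succ, hrefl]
  ring

lemma card_flat_mul_mid_le_one (hMG : 2 * M < G)
    (hflat : ∀ i j, M ≤ i → i ≤ j → j ≤ G - M - 1 → v i = v j) (hv : ∀ i < G, 0 ≤ v i)
    (hsum : ∑ j ∈ range G, v j ≤ 1) : ((G - 2 * M : ℕ) : ℝ) * v ((G - 1) / 2) ≤ 1 := by
  have hconst : ∀ i ∈ Finset.Ico M (G - M), v i = v ((G - 1) / 2) := fun i hi => by
    obtain ⟨hi₁, hi₂⟩ := Finset.mem_Ico.1 hi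
    rcases le_total i ((G - 1) / 2) with h | h
    · exact hflat _ _ hi₁ h (by omega)
    · exact (hflat _ _ (by omega) h (by omega)).symm
  have hsub : ∑ i ∈ Finset.Ico M (G - M), v i ≤ ∑ j ∈ range G, v j :=
    sum_le_sum_of_subset_of_nonneg (fun i hi => mem_range.2 (by have := Finset.mem_Ico.1 hi; omega))
      fun i hi _ => hv i (mem_range.1 hi)
  rw [sum_congr rfl hconst, sum_const, Nat.card_Ico, nsmul_eq_mul,
    show G - M - M = G - 2 * M by omega] at hsub
  exact hsub.trans hsum

end Level

lemma tendsto_sub_two_mul_atTop {g m ℓ : ℕ → ℕ} (hg : StrictMono g) (hℓ2 : ∀ n, 2 ≤ ℓ n)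
    (hmg : ∀ n, 2 * m n < g n)
    (hlim : Tendsto (fun n => (ℓ n : ℝ) ^ m n / g n) atTop (𝓝 0)) :
    Tendsto (fun n => g n - 2 * m n) atTop atTop := by
  obtain ⟨N, hN⟩ := eventually_atTop.1 (hlim.eventually_lt_const (by norm_num : (0 : ℝ) < 1 / 4))
  refine tendsto_atTop_atTop.2 fun b => ⟨max N (2 * b), fun n hn => ?_⟩
  have h₁ : 4 * ℓ n ^ m n < g n := by
    have h := hN n (le_of_max_le_left hn)
    rw [div_lt_iff₀ (by exact_mod_cast (hmg n).trans_le' (Nat.zero_le _))] at h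
    exact_mod_cast (by push_cast; linarith : ((4 * ℓ n ^ m n : ℕ) : ℝ) < g n)
  have h₂ : 2 ^ m n ≤ ℓ n ^ m n := Nat.pow_le_pow_left (hℓ2 n) _
  have h₃ : m n < 2 ^ m n := Nat.lt_two_pow_self
  have h₄ : n ≤ g n := hg.id_le n
  omega

lemma tendsto_zero_of_mul_le_one {ι : Type*} {l : Filter ι} {a c : ι → ℝ}
    (ha : Tendsto a l atTop) (hc : ∀ i, 0 ≤ c i) (h : ∀ i, a i * c i ≤ 1) :
    Tendsto c l (𝓝 0) := by
  refine tendsto_of_tendsto_of_tendsto_of_le_of_le' tendsto_const_nhds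
    (tendsto_inv_atTop_zero.comp ha) (Eventually.of_forall hc) ?_
  filter_upwards [ha.eventually_gt_atTop 0] with i hi
  rw [Function.comp_apply, inv_eq_one_div, le_div_iff₀ hi, mul_comm]
  exact h i

theorem B_alpha_strongly_sym_porous_general
    (g m ℓ k : ℕ → ℕ) (w : ℕ → ℕ → ℝ) (A : Set ℕ)
    (hg : StrictMono g) (hgodd : ∀ n, Odd (g n))
    (hℓ2 : ∀ n, 2 ≤ ℓ n)
    (hmg : ∀ n, 2 * m n < g n)
    (hlim1 : Filter.Tendsto (fun n => (ℓ n : ℝ) ^ (m n) / (g n : ℝ))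
      Filter.atTop (nhds 0))
    -- w n is the singleton-weight function of the measure μₙ:
    (hwpos : ∀ n j, j < g n → 0 < w n j)
    (hwsum : ∀ n, ∑ j ∈ Finset.range (g n), w n j = 1)
    (hwmid : ∀ n i j, m n ≤ i → i ≤ j → j ≤ g n - m n - 1 → w n i = w n j)
    (hwend : ∀ n i, i < m n →
      w n i = w n (g n - i - 1) ∧ w n i = w n (i + 1) / (ℓ n : ℝ))
    (hk : StrictMono k)
    (hA : A.Infinite) :
    StronglySymPorous (weightMap w ''
      {f : ℕ → ℕ | (∀ n, f n < g n) ∧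
        ∀ n ∈ A, f (k n) = (g (k n) - 1) / 2}) := by
  have hmid_lt : ∀ n, (g n - 1) / 2 < g n := fun n => by have := hmg n; omega
  have hsymm : ∀ n, ∀ i < g n, w n i = w n (g n - 1 - i) := fun n _ =>
    eq_reflect_of_flat_of_end_symm (hmg n) (hwmid n) fun i hi => (hwend n i hi).1
  have hbal : ∀ n, 2 * ∑ j ∈ Finset.range ((g n - 1) / 2), w n j + w n ((g n - 1) / 2) = 1 :=
    fun n => (two_mul_sum_range_mid_add (hgodd n) (hsymm n)).trans (hwsum n)
  have hmid : Tendsto (fun n => w n ((g n - 1) / 2)) atTop (𝓝 0) :=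
    tendsto_zero_of_mul_le_one
      (tendsto_natCast_atTop_atTop.comp (tendsto_sub_two_mul_atTop hg hℓ2 hmg hlim1))
      (fun n => (hwpos n _ (hmid_lt n)).le)
      fun n => card_flat_mul_mid_le_one (hmg n) (hwmid n) (fun i hi => (hwpos n i hi).le)
        (hwsum n).le
  simpa only [Set.forall_mem_image] using stronglySymPorous_weightMap_image_of_digit_eq hwpos
    (fun n => (hwsum n).le) hbal hmid (hA.image hk.injective.injOn)

/-- each B_α maps to a strongly symmetrically porous subset of [0,1]. -/
theorem B_alpha_strongly_sym_porous
    (g m ℓ k : ℕ → ℕ) (w : ℕ → ℕ → ℝ) (A : Set ℕ)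
    (hg : StrictMono g) (hgodd : ∀ n, Odd (g n)) (hg3 : ∀ n, 3 ≤ g n)
    (hm : StrictMono m) (hℓ : StrictMono ℓ) (hℓ2 : ∀ n, 2 ≤ ℓ n)
    (hmg : ∀ n, 2 * m n < g n)
    (hlim1 : Filter.Tendsto (fun n => (ℓ n : ℝ) ^ (m n) / (g n : ℝ))
      Filter.atTop (nhds 0))
    (hlim2 : Filter.Tendsto (fun n => (ℓ n : ℝ) / (ℓ (n + 1) : ℝ))
      Filter.atTop (nhds 0))
    -- w n is the singleton-weight function of the measure μₙ:
    (hwpos : ∀ n j, j < g n → 0 < w n j)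
    (hwsum : ∀ n, ∑ j ∈ Finset.range (g n), w n j = 1)
    (hwmid : ∀ n i j, m n ≤ i → i ≤ j → j ≤ g n - m n - 1 → w n i = w n j)
    (hwend : ∀ n i, i < m n →
      w n i = w n (g n - i - 1) ∧ w n i = w n (i + 1) / (ℓ n : ℝ))
    (hk : StrictMono k) (hk10 : ∀ n, 10 ≤ k (n + 1) - k n)
    (hA : A.Infinite) :
    StronglySymPorous (weightMap w ''
      {f : ℕ → ℕ | (∀ n, f n < g n) ∧
        ∀ n ∈ A, f (k n) = (g (k n) - 1) / 2}) :=
  B_alpha_strongly_sym_porous_general g m ℓ k w A hg hgodd hℓ2 hmg hlim1 hwpos hwsum hwmid hwend hk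
    hA
end

section
/- For X = ∏ₙ g(n) with g converging to infinity, if A ∈ ℐ_X (i.e., A is covered by a countable family of predictors), then the image of A in [0,1] under the canonical Cantor-expansion map is σ-strongly porous (a countable union of strongly porous sets). -/
open Set Filter

/-- An X-predictor for X = ∏ₙ g(n): an infinite set D of coordinates together
with, for each n, a guessing function depending on the first n values. -/
structure Predictor (g : ℕ → ℕ) where
  D : Set ℕ
  infinite : D.Infinite
  pred : (n : ℕ) → ((k : Fin n) → ℕ) → ℕ
  bound : ∀ (n : ℕ) (x : (k : Fin n) → ℕ), (∀ k, x k < g k.val) → pred n x < g n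

/-- π predicts f iff πₙ(f↾n) = f(n) for all but finitely many n ∈ D. -/
def Predicts {g : ℕ → ℕ} (π : Predictor g) (f : ℕ → ℕ) : Prop :=
  {n | n ∈ π.D ∧ π.pred n (fun k => f k.val) ≠ f n}.Finite

/-- The space X = ∏ₙ {0,…,g(n)−1}, as a set of functions ℕ → ℕ. -/
def Xspace (g : ℕ → ℕ) : Set (ℕ → ℕ) := {f | ∀ n, f n < g n}

/-- The ideal ℐ_X of sets covered by countably many predictors. -/
def predIdeal (g : ℕ → ℕ) : Set (Set (ℕ → ℕ)) :=
  {A | A ⊆ Xspace g ∧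
    ∃ Ps : Set (Predictor g), Ps.Countable ∧ ∀ f ∈ A, ∃ π ∈ Ps, Predicts π f}

open Set Filter

/-- The canonical Cantor-expansion map φ : X → [0,1]. -/
noncomputable def cantorMap (g : ℕ → ℕ) (f : ℕ → ℕ) : ℝ :=
  ∑' n, (f n : ℝ) / ∏ k ∈ Finset.range (n + 1), (g k : ℝ)

/-!
Fix a predictor `π` and `m`, and let `B` be the image under `φ` of the points on which `π` errs
at no `n ∈ D` with `n ≥ m`. Let `f` be such a point and `n ∈ D`, `n ≥ m`. The points of `B` inside
the open level-`n` cylinder interval of `f` (of length `1 / (g 0 ⋯ g (n - 1))`) come from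
sequences sharing the first `n` digits of `f`, hence, `π` being correct there, also the `n`-th
one. So they lie in the level-`(n + 1)` subinterval containing `φ f`, which is a `1 / g n`
fraction of it, and one of the two complementary gaps is a fraction `≥ 1 - 2 / g n` of the
distance from `φ f` to its far end. As `g n → ∞` and `D` is infinite, `B` is strongly porous,
and countably many such `B` cover `φ(A)`.
-/

open Topology

section Gaps

variable {A : Set ℝ}

lemma lamGap_nonneg (a b : ℝ) : 0 ≤ lamGap A a b :=
  Real.sSup_nonneg fun _ hl => hl.1

lemma sub_le_lamGap {a b c d : ℝ} (hac : a ≤ c) (hcd : c ≤ d) (hdb : d ≤ b)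
    (hA : Ioo c d ∩ A = ∅) : d - c ≤ lamGap A a b :=
  le_csSup ⟨b - a, fun _ ⟨_, _, he, heb, _⟩ => by linarith⟩
    ⟨sub_nonneg.2 hcd, c, hac, by rwa [add_sub_cancel], by rwa [add_sub_cancel]⟩

lemma lamGap_le_of_mem {a ε : ℝ} (ha : a ∈ A) (hε : 0 ≤ ε) :
    lamGap A (a - ε) (a + ε) ≤ ε := by
  refine Real.sSup_le ?_ hε
  rintro l ⟨-, c, hc, hcl, hA⟩
  have ha' : a ∉ Ioo c (c + l) := fun h => (eq_empty_iff_forall_notMem.1 hA) a ⟨h, ha⟩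
  rw [mem_Ioo, not_and_or, not_lt, not_lt] at ha'
  rcases ha' with h | h <;> linarith

/-- Use the larger of the gaps `(s, L)` and `(L + W / c, s + W)`: it has length at least
`(W - W / c) / 2`. -/
lemma exists_le_lamGap_of_inter_Ioo_subset {a s L W c : ℝ} (hW : 0 < W) (hc : 2 ≤ c)
    (hsL : s ≤ L) (hLW : L + W / c ≤ s + W) (ha : a ∈ Icc L (L + W / c))
    (hA : A ∩ Ioo s (s + W) ⊆ Icc L (L + W / c)) :
    ∃ ε, 0 < ε ∧ ε ≤ W ∧ (1 - 2 / c) * ε ≤ lamGap A (a - ε) (a + ε) := by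
  obtain ⟨haL, haR⟩ := ha
  set w := W / c with hw
  have hc0 : 0 < c := by linarith
  have hWw : W = c * w := by rw [hw]; field_simp
  have hw0 : 0 < w := by positivity
  have hratio (ε ℓ : ℝ) (hε : ε ≤ ℓ + w) (hℓ : (c - 2) * w ≤ 2 * ℓ) : (1 - 2 / c) * ε ≤ ℓ := by
    rw [one_sub_div hc0.ne', div_mul_eq_mul_div, div_le_iff₀ hc0]
    nlinarith
  rcases le_total (s + W - (L + w)) (L - s) with hleft | hright
  · refine ⟨a - s, by nlinarith, by linarith, ?_⟩
    refine (hratio _ (L - s) (by linarith) (by nlinarith)).trans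
      (sub_le_lamGap (by linarith) hsL (by linarith) ?_)
    rw [eq_empty_iff_forall_notMem]
    rintro x ⟨hx, hxA⟩
    have := hA ⟨hxA, hx.1, by linarith [hx.2]⟩
    linarith [this.1, hx.2]
  · refine ⟨s + W - a, by nlinarith, by linarith, ?_⟩
    refine (hratio _ (s + W - (L + w)) (by linarith) (by nlinarith)).trans
      (sub_le_lamGap (by linarith) hLW (by linarith) ?_)
    rw [eq_empty_iff_forall_notMem]
    rintro x ⟨hx, hxA⟩
    have := hA ⟨hxA, by linarith [hx.1], hx.2⟩
    linarith [this.2, hx.1]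

lemma stronglyPorous_of_forall_exists_le_lamGap
    (h : ∀ a ∈ A, ∀ δ > 0, ∀ r > 0, ∃ ε, 0 < ε ∧ ε < r ∧ (1 - δ) * ε ≤ lamGap A (a - ε) (a + ε)) :
    StronglyPorous A := by
  intro a ha
  have hle : ∀ᶠ ε in 𝓝[>] (0 : ℝ), lamGap A (a - ε) (a + ε) / ε ≤ 1 := by
    filter_upwards [self_mem_nhdsWithin] with ε (hε : 0 < ε)
    exact (div_le_one hε).2 (lamGap_le_of_mem ha hε.le)
  have hnonneg : ∀ᶠ ε in 𝓝[>] (0 : ℝ), 0 ≤ lamGap A (a - ε) (a + ε) / ε := by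
    filter_upwards [self_mem_nhdsWithin] with ε (hε : 0 < ε)
    exact div_nonneg (lamGap_nonneg _ _) hε.le
  refine le_antisymm (limsup_le_of_le (IsCoboundedUnder.of_frequently_ge hnonneg.frequently) hle)
    (le_of_forall_sub_le fun δ hδ => le_limsup_of_frequently_le ?_ ⟨1, hle⟩)
  refine (nhdsGT_basis (0 : ℝ)).frequently_iff.2 fun r hr => ?_
  obtain ⟨ε, hε, hεr, hgap⟩ := h a ha δ hδ r hr
  exact ⟨ε, ⟨hε, hεr⟩, (le_div_iff₀ hε).2 hgap⟩

end Gaps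

section CantorExpansion

variable {g f f' : ℕ → ℕ}

lemma pos_of_mem_Xspace (hf : f ∈ Xspace g) (n : ℕ) : 0 < g n :=
  (Nat.zero_le _).trans_lt (hf n)

def cantorDenom (g : ℕ → ℕ) (n : ℕ) : ℕ := ∏ k ∈ Finset.range n, g k

noncomputable def cantorApprox (g : ℕ → ℕ) (n : ℕ) (f : ℕ → ℕ) : ℝ :=
  ∑ k ∈ Finset.range n, (f k : ℝ) / cantorDenom g (k + 1)

/-- The digits `f 0, …, f (n - 1)` read as a mixed-radix integer. -/
def cylIndex (g : ℕ → ℕ) : ℕ → (ℕ → ℕ) → ℕ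
  | 0, _ => 0
  | n + 1, f => cylIndex g n f * g n + f n

lemma cantorDenom_succ (g : ℕ → ℕ) (n : ℕ) : cantorDenom g (n + 1) = cantorDenom g n * g n :=
  Finset.prod_range_succ _ _

lemma inv_cantorDenom_succ (g : ℕ → ℕ) (n : ℕ) :
    (cantorDenom g (n + 1) : ℝ)⁻¹ = (cantorDenom g n : ℝ)⁻¹ / g n := by
  rw [cantorDenom_succ, Nat.cast_mul, mul_inv, div_eq_mul_inv]

lemma cantorDenom_pos (hg : ∀ n, 0 < g n) (n : ℕ) : 0 < cantorDenom g n :=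
  Finset.prod_pos fun k _ => hg k

lemma tendsto_cantorDenom_atTop (hg : ∀ n, 0 < g n) (hginf : Tendsto g atTop atTop) :
    Tendsto (cantorDenom g) atTop atTop := by
  rw [← tendsto_add_atTop_iff_nat 1]
  refine tendsto_atTop_mono (fun n => ?_) hginf
  rw [cantorDenom_succ]
  exact Nat.le_mul_of_pos_left _ (cantorDenom_pos hg n)

lemma cantorApprox_succ (g : ℕ → ℕ) (n : ℕ) (f : ℕ → ℕ) :
    cantorApprox g (n + 1) f = cantorApprox g n f + f n / cantorDenom g (n + 1) :=
  Finset.sum_range_succ _ _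

lemma cantorApprox_congr {n : ℕ} (h : ∀ k < n, f k = f' k) :
    cantorApprox g n f = cantorApprox g n f' :=
  Finset.sum_congr rfl fun k hk => by rw [h k (Finset.mem_range.1 hk)]

lemma cantorApprox_le_succ (g : ℕ → ℕ) (n : ℕ) (f : ℕ → ℕ) :
    cantorApprox g n f ≤ cantorApprox g (n + 1) f := by
  rw [cantorApprox_succ]
  exact le_add_of_nonneg_right (by positivity)

lemma cantorApprox_succ_add_inv_le (hf : f ∈ Xspace g) (n : ℕ) :
    cantorApprox g (n + 1) f + (cantorDenom g (n + 1) : ℝ)⁻¹ ≤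
      cantorApprox g n f + (cantorDenom g n : ℝ)⁻¹ := by
  have hdigit : (f n : ℝ) + 1 ≤ g n := by exact_mod_cast hf n
  have hgn : (0 : ℝ) < g n := by exact_mod_cast pos_of_mem_Xspace hf n
  rw [cantorApprox_succ, cantorDenom_succ, Nat.cast_mul, add_assoc, add_le_add_iff_left]
  calc (f n : ℝ) / (cantorDenom g n * g n) + ((cantorDenom g n : ℝ) * g n)⁻¹
      = (f n + 1) / g n * (cantorDenom g n : ℝ)⁻¹ := by ring
    _ ≤ 1 * (cantorDenom g n : ℝ)⁻¹ := by gcongr; exact (div_le_one hgn).2 hdigit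
    _ = (cantorDenom g n : ℝ)⁻¹ := one_mul _

lemma cantorApprox_mul_cantorDenom (hg : ∀ n, 0 < g n) (n : ℕ) (f : ℕ → ℕ) :
    cantorApprox g n f * cantorDenom g n = cylIndex g n f := by
  induction n with
  | zero => simp [cantorApprox, cylIndex]
  | succ n ih =>
    have hD : (cantorDenom g n : ℝ) ≠ 0 := by exact_mod_cast (cantorDenom_pos hg n).ne'
    have hgn : (g n : ℝ) ≠ 0 := by exact_mod_cast (hg n).ne'
    rw [cantorApprox_succ, cylIndex, cantorDenom_succ]
    push_cast
    rw [← ih]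
    field_simp

lemma eq_of_cylIndex_eq (hf : f ∈ Xspace g) (hf' : f' ∈ Xspace g) :
    ∀ {n}, cylIndex g n f = cylIndex g n f' → ∀ k < n, f k = f' k
  | 0, _, k, hk => absurd hk k.not_lt_zero
  | n + 1, h, k, hk => by
    have hdigit : f n = f' n := by
      simpa [cylIndex, Nat.mul_add_mod, Nat.mod_eq_of_lt (hf n), Nat.mod_eq_of_lt (hf' n)]
        using congrArg (· % g n) h
    have hprefix : cylIndex g n f = cylIndex g n f' := by
      rw [cylIndex, cylIndex, hdigit, Nat.add_right_cancel_iff] at h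
      exact Nat.eq_of_mul_eq_mul_right (pos_of_mem_Xspace hf n) h
    rcases Nat.lt_succ_iff_lt_or_eq.1 hk with hk | rfl
    exacts [eq_of_cylIndex_eq hf hf' hprefix k hk, hdigit]

lemma monotone_cantorApprox (g f : ℕ → ℕ) : Monotone fun n => cantorApprox g n f :=
  monotone_nat_of_le_succ fun n => cantorApprox_le_succ g n f

lemma antitone_cantorApprox_add_inv (hf : f ∈ Xspace g) :
    Antitone fun n => cantorApprox g n f + (cantorDenom g n : ℝ)⁻¹ :=
  antitone_nat_of_succ_le (cantorApprox_succ_add_inv_le hf)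

lemma hasSum_cantorMap (hf : f ∈ Xspace g) :
    HasSum (fun k => (f k : ℝ) / cantorDenom g (k + 1)) (cantorMap g f) := by
  have hbound (n : ℕ) : cantorApprox g n f ≤ 1 := by
    have h0 : cantorApprox g 0 f + (cantorDenom g 0 : ℝ)⁻¹ = 1 := by
      simp [cantorApprox, cantorDenom]
    linarith [antitone_cantorApprox_add_inv hf (Nat.zero_le n),
      inv_nonneg.2 (Nat.cast_nonneg (α := ℝ) (cantorDenom g n))]
  have hsum := summable_of_sum_range_le (fun k => by positivity) hbound
  convert hsum.hasSum using 1
  simp only [cantorMap, cantorDenom, Nat.cast_prod]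

lemma cantorMap_mem_Icc (hf : f ∈ Xspace g) (n : ℕ) :
    cantorMap g f ∈ Icc (cantorApprox g n f) (cantorApprox g n f + (cantorDenom g n : ℝ)⁻¹) := by
  have hlim : Tendsto (fun N => cantorApprox g N f) atTop (𝓝 (cantorMap g f)) :=
    (hasSum_cantorMap hf).tendsto_sum_nat
  refine ⟨ge_of_tendsto hlim ?_, le_of_tendsto hlim ?_⟩ <;>
    filter_upwards [eventually_ge_atTop n] with N hN
  · exact monotone_cantorApprox g f hN
  · calc cantorApprox g N f ≤ cantorApprox g N f + (cantorDenom g N : ℝ)⁻¹ :=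
          le_add_of_nonneg_right (by positivity)
      _ ≤ _ := antitone_cantorApprox_add_inv hf hN

/-- Scaled by `cantorDenom g n`, the interval becomes `(cylIndex g n f, cylIndex g n f + 1)` while
`cantorMap g f'` lands in `[cylIndex g n f', cylIndex g n f' + 1]`; so the two indices coincide. -/
lemma eq_of_cantorMap_mem_Ioo (hf : f ∈ Xspace g) (hf' : f' ∈ Xspace g) {n : ℕ}
    (h : cantorMap g f' ∈ Ioo (cantorApprox g n f) (cantorApprox g n f + (cantorDenom g n : ℝ)⁻¹)) :
    ∀ k < n, f k = f' k := by
  have hg := pos_of_mem_Xspace hf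
  have hD : (0 : ℝ) < cantorDenom g n := by exact_mod_cast cantorDenom_pos hg n
  obtain ⟨hlo, hhi⟩ := cantorMap_mem_Icc hf' n
  have hscale (x : ℝ) :
      (x + (cantorDenom g n : ℝ)⁻¹) * cantorDenom g n = x * cantorDenom g n + 1 := by
    rw [add_mul, inv_mul_cancel₀ hD.ne']
  have h₁ : (cylIndex g n f : ℝ) < cylIndex g n f' + 1 := by
    rw [← cantorApprox_mul_cantorDenom hg, ← cantorApprox_mul_cantorDenom hg, ← hscale]
    exact mul_lt_mul_of_pos_right (h.1.trans_le hhi) hD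
  have h₂ : (cylIndex g n f' : ℝ) < cylIndex g n f + 1 := by
    rw [← cantorApprox_mul_cantorDenom hg, ← cantorApprox_mul_cantorDenom hg, ← hscale]
    exact mul_lt_mul_of_pos_right (hlo.trans_lt h.2) hD
  norm_cast at h₁ h₂
  exact eq_of_cylIndex_eq hf hf' (by omega)

lemma cantorMap_image_inter_Ioo_subset {S : Set (ℕ → ℕ)} (hS : S ⊆ Xspace g) (hf : f ∈ Xspace g)
    {n : ℕ} (hdigit : ∀ f' ∈ S, (∀ k < n, f k = f' k) → f n = f' n) :
    cantorMap g '' S ∩ Ioo (cantorApprox g n f) (cantorApprox g n f + (cantorDenom g n : ℝ)⁻¹) ⊆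
      Icc (cantorApprox g (n + 1) f)
        (cantorApprox g (n + 1) f + (cantorDenom g (n + 1) : ℝ)⁻¹) := by
  rintro _ ⟨⟨f', hf'S, rfl⟩, hmem⟩
  have hprefix := eq_of_cantorMap_mem_Ioo hf (hS hf'S) hmem
  have happrox : cantorApprox g (n + 1) f = cantorApprox g (n + 1) f' := by
    refine cantorApprox_congr fun k hk => ?_
    rcases Nat.lt_succ_iff_lt_or_eq.1 hk with hk | rfl
    exacts [hprefix k hk, hdigit f' hf'S hprefix]
  rw [happrox]
  exact cantorMap_mem_Icc (hS hf'S) (n + 1)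

end CantorExpansion

namespace Predictor

variable {g : ℕ → ℕ}

def correctFrom (π : Predictor g) (m : ℕ) : Set (ℕ → ℕ) :=
  {f | f ∈ Xspace g ∧ ∀ n ∈ π.D, m ≤ n → π.pred n (fun k => f k) = f n}

lemma digit_eq_of_mem_correctFrom {π : Predictor g} {m n : ℕ} {f f' : ℕ → ℕ}
    (hf : f ∈ π.correctFrom m) (hf' : f' ∈ π.correctFrom m) (hn : n ∈ π.D) (hmn : m ≤ n) (h : ∀ k < n, f k = f' k) :
    f n = f' n := by
  rw [← hf.2 n hn hmn, ← hf'.2 n hn hmn]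
  exact congrArg _ (funext fun k => h k k.2)

theorem stronglyPorous_image_correctFrom (hginf : Tendsto g atTop atTop) (π : Predictor g)
    (m : ℕ) : StronglyPorous (cantorMap g '' π.correctFrom m) := by
  refine stronglyPorous_of_forall_exists_le_lamGap ?_
  rintro _ ⟨f, hf, rfl⟩ δ hδ r hr
  have hg := pos_of_mem_Xspace hf.1
  have hgR : Tendsto (fun n => (g n : ℝ)) atTop atTop := tendsto_natCast_atTop_atTop.comp hginf
  obtain ⟨n, hnD, hmn, hg2, hgδ, hDr⟩ : ∃ n ∈ π.D, m ≤ n ∧ 2 ≤ (g n : ℝ) ∧ 2 / δ ≤ g n ∧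
      r⁻¹ < cantorDenom g n :=
    ((Nat.frequently_atTop_iff_infinite.2 π.infinite).and_eventually
      ((eventually_ge_atTop m).and <| (hgR.eventually_ge_atTop 2).and <|
        (hgR.eventually_ge_atTop _).and <| (tendsto_natCast_atTop_atTop.comp
          (tendsto_cantorDenom_atTop hg hginf)).eventually_gt_atTop _)).exists
  have hD : (0 : ℝ) < cantorDenom g n := by exact_mod_cast cantorDenom_pos hg n
  have hsub := cantorMap_image_inter_Ioo_subset (fun _ h => h.1) hf.1
    fun f' hf' => digit_eq_of_mem_correctFrom hf hf' hnD hmn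
  have hIcc := cantorMap_mem_Icc hf.1 (n + 1)
  have hnest := cantorApprox_succ_add_inv_le hf.1 n
  rw [inv_cantorDenom_succ] at hsub hIcc hnest
  obtain ⟨ε, hε, hεW, hgap⟩ := exists_le_lamGap_of_inter_Ioo_subset (inv_pos.2 hD) hg2
    (cantorApprox_le_succ g n f) hnest hIcc hsub
  refine ⟨ε, hε, hεW.trans_lt ((inv_lt_comm₀ hr hD).1 hDr), le_trans ?_ hgap⟩
  have : 2 / (g n : ℝ) ≤ δ := (div_le_comm₀ hδ (by linarith)).1 hgδ
  gcongr

lemma _root_.Predicts.exists_mem_correctFrom {π : Predictor g} {f : ℕ → ℕ} (hπ : Predicts π f)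
    (hf : f ∈ Xspace g) : ∃ m, f ∈ π.correctFrom m := by
  obtain ⟨m, hm⟩ := Set.Finite.bddAbove hπ
  exact ⟨m + 1, hf, fun n hn hmn => by_contra fun hne => absurd (hm ⟨hn, hne⟩) (by omega)⟩

end Predictor

lemma exists_seq_cover_of_countable {α : Type*} {P : Set α → Prop} {T : Set (Set α)}
    (hT : T.Countable) (hP₀ : P ∅) (hP : ∀ t ∈ T, P t) :
    ∃ F : ℕ → Set α, (∀ n, P (F n)) ∧ ⋃₀ T ⊆ ⋃ n, F n := by
  obtain ⟨F, hF⟩ := (hT.insert ∅).exists_eq_range (insert_nonempty _ _)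
  refine ⟨F, fun n => ?_, fun x ⟨t, ht, hx⟩ => ?_⟩
  · rcases (hF ▸ mem_range_self n : F n ∈ insert ∅ T) with h | h
    exacts [h ▸ hP₀, hP _ h]
  · obtain ⟨n, rfl⟩ : t ∈ range F := hF ▸ mem_insert_of_mem _ ht
    exact mem_iUnion.2 ⟨n, hx⟩

theorem predIdeal_image_sigma_strongly_porous_general (g : ℕ → ℕ)
    (hginf : Filter.Tendsto g Filter.atTop Filter.atTop)
    (A : Set (ℕ → ℕ)) (hA : A ∈ predIdeal g) :
    ∃ F : ℕ → Set ℝ, (∀ n, StronglyPorous (F n)) ∧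
      cantorMap g '' A ⊆ ⋃ n, F n := by
  obtain ⟨hAX, Ps, hPs, hcov⟩ := hA
  obtain ⟨F, hF, hcover⟩ := exists_seq_cover_of_countable
    (hPs.biUnion fun π _ => countable_range fun m => cantorMap g '' π.correctFrom m)
    (fun _ h => h.elim : StronglyPorous ∅)
    (by
      simp only [mem_iUnion, mem_range]
      rintro _ ⟨π, -, m, rfl⟩
      exact π.stronglyPorous_image_correctFrom hginf m)
  refine ⟨F, hF, ?_⟩
  rintro _ ⟨f, hfA, rfl⟩
  obtain ⟨π, hπ, hpred⟩ := hcov f hfA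
  obtain ⟨m, hm⟩ := hpred.exists_mem_correctFrom (hAX hfA)
  exact hcover ⟨_, mem_biUnion hπ ⟨m, rfl⟩, mem_image_of_mem _ hm⟩

/-- if A ∈ ℐ_X then φ(A) is σ-strongly porous. -/
theorem predIdeal_image_sigma_strongly_porous (g : ℕ → ℕ) (hg : ∀ n, 2 ≤ g n)
    (hginf : Filter.Tendsto g Filter.atTop Filter.atTop)
    (A : Set (ℕ → ℕ)) (hA : A ∈ predIdeal g) :
    ∃ F : ℕ → Set ℝ, (∀ n, StronglyPorous (F n)) ∧
      cantorMap g '' A ⊆ ⋃ n, F n :=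
  predIdeal_image_sigma_strongly_porous_general g hginf A hA
end
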